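/- Fix m, l, g > 0, I₁, I₃ > 0, set 𝕀 = diag(I₁, I₁, I₃) and χ = e₃ = (0,0,1), and let ρ ∈ ℝ satisfy 0 < ρ < m² l²/I₁. Then for every Ω₃⁰ ∈ ℝ the upright-spinning equilibrium x_e = (Ω, v, Γ) = (Ω₃⁰ e₃, 0, e₃) of the closed-loop Euler–Poincaré system is Lyapunov stable: for every ε > 0 there exists δ > 0 such that every solution (Ω, v, Γ) : ℝ → ℝ³ × ℝ³ × ℝ³ of the closed-loop Euler–Poincaré system with ‖(Ω(0), v(0), Γ(0)) − x_e‖ < δ satisfies ‖(Ω(t), v(t), Γ(t)) − x_e‖ < ε for all t ≥ 0. -/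

import Mathlib

/-!
The upright top is shown stable by the energy–Casimir method. Along solutions, the energy
`E = μ·Ω/2 + p·v/2 + m g l χ·Γ`, the Casimirs `|p|²` and `|Γ|²`, and (for the Lagrange top) the
spin `Ω₃` are conserved. The combination `V = -E + |p|²/ρ + (m g l/2)|Γ|² + I₃ Ω₃ (Ω₃ - Ω₃⁰)`
is, up to a constant, a quadratic form in the deviation from the equilibrium, positive
definite when `ρ I₁ < m² l²`. Since `V` is conserved and lies between two multiples of
the squared distance, that distance stays uniformly small.
-/

open Matrix

/-- The closed-loop Euler–Poincaré system: with `μ = 𝕀Ω + m l (χ × v)` and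
`p = ρ v + m l (Ω × χ)`, the curves satisfy
`μ' = μ × Ω + p × v − m g l (χ × Γ)`, `p' = p × Ω`, `Γ' = Γ × Ω`. -/
def ClosedLoopEP (m l g ρ : ℝ) (χ : Fin 3 → ℝ) (I : Matrix (Fin 3) (Fin 3) ℝ)
    (Ω v Γ : ℝ → Fin 3 → ℝ) : Prop :=
  Differentiable ℝ Ω ∧ Differentiable ℝ v ∧ Differentiable ℝ Γ ∧
  (∀ t, deriv (fun s => I *ᵥ Ω s + (m * l) • (χ ⨯₃ v s)) t
      = (I *ᵥ Ω t + (m * l) • (χ ⨯₃ v t)) ⨯₃ Ω t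
        + (ρ • v t + (m * l) • (Ω t ⨯₃ χ)) ⨯₃ v t - (m * g * l) • (χ ⨯₃ Γ t)) ∧
  (∀ t, deriv (fun s => ρ • v s + (m * l) • (Ω s ⨯₃ χ)) t
      = (ρ • v t + (m * l) • (Ω t ⨯₃ χ)) ⨯₃ Ω t) ∧
  (∀ t, deriv Γ t = Γ t ⨯₃ Ω t)

local notation "e₃" => ![(0 : ℝ), 0, 1]

section Calculus

variable {t : ℝ}

theorem HasDerivAt.dotProduct {n : Type*} [Fintype n] {f g : ℝ → n → ℝ} {f' g' : n → ℝ}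
    (hf : HasDerivAt f f' t) (hg : HasDerivAt g g' t) :
    HasDerivAt (fun s => f s ⬝ᵥ g s) (f' ⬝ᵥ g t + f t ⬝ᵥ g') t :=
  (HasDerivAt.fun_sum (u := Finset.univ) fun i _ =>
    (hasDerivAt_pi.1 hf i).mul (hasDerivAt_pi.1 hg i)).congr_deriv Finset.sum_add_distrib

theorem HasDerivAt.mulVec {n : Type*} [Fintype n] {f : ℝ → n → ℝ} {f' : n → ℝ}
    (A : Matrix n n ℝ) (hf : HasDerivAt f f' t) :
    HasDerivAt (fun s => A *ᵥ f s) (A *ᵥ f') t :=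
  hasDerivAt_pi.2 fun i => ((hasDerivAt_const t (A i)).dotProduct hf).congr_deriv
    (by rw [zero_dotProduct, zero_add]; rfl)

theorem HasDerivAt.cross {f g : ℝ → Fin 3 → ℝ} {f' g' : Fin 3 → ℝ}
    (hf : HasDerivAt f f' t) (hg : HasDerivAt g g' t) :
    HasDerivAt (fun s => f s ⨯₃ g s) (f' ⨯₃ g t + f t ⨯₃ g') t := by
  have hf := hasDerivAt_pi.1 hf
  have hg := hasDerivAt_pi.1 hg
  refine hasDerivAt_pi.2 fun i => ?_
  fin_cases i
  · exact (((hf 1).mul (hg 2)).sub ((hf 2).mul (hg 1))).congr_deriv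
      (by simp only [Fin.zero_eta, Pi.add_apply, cross_apply, cons_val_zero]; ring)
  · exact (((hf 2).mul (hg 0)).sub ((hf 0).mul (hg 2))).congr_deriv
      (by simp only [Fin.mk_one, Pi.add_apply, cross_apply, cons_val_one, cons_val_zero]; ring)
  · exact (((hf 0).mul (hg 1)).sub ((hf 1).mul (hg 0))).congr_deriv
      (by simp only [Fin.reduceFinMk, Pi.add_apply, cross_apply, cons_val]; ring)

theorem eq_of_forall_hasDerivAt_zero {f : ℝ → ℝ} (hf : ∀ t, HasDerivAt f 0 t) (t s : ℝ) :
    f t = f s :=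
  is_const_of_deriv_eq_zero (fun t => (hf t).differentiableAt) (fun t => (hf t).deriv) t s

end Calculus

theorem sqrt_lt_of_conserved {α : Type*} {S V : α → ℝ} {c K ε : ℝ} (hc : 0 < c) (hK : 0 < K)
    (hlow : ∀ x, c * S x ≤ V x) (hup : ∀ x, V x ≤ K * S x) {x y : α} (hV : V y = V x)
    (hx : √(S x) < ε * √(c / K)) : √(S y) < ε := by
  have hδ : 0 < ε * √(c / K) := (Real.sqrt_nonneg _).trans_lt hx
  have hε : 0 < ε := pos_of_mul_pos_left hδ (Real.sqrt_nonneg _)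
  rw [Real.sqrt_lt' hδ, mul_pow, Real.sq_sqrt (by positivity)] at hx
  rw [Real.sqrt_lt' hε]
  refine lt_of_mul_lt_mul_left ?_ hc.le
  calc c * S y ≤ V x := hV ▸ hlow y
    _ ≤ K * S x := hup x
    _ < K * (ε ^ 2 * (c / K)) := by gcongr
    _ = c * ε ^ 2 := by field_simp

theorem exists_pos_mul_sq_add_sq_le {C a : ℝ} (hC : 0 < C) (ha : 0 < a) (b : ℝ) :
    ∃ κ > 0, ∀ x y : ℝ, κ * (x ^ 2 + y ^ 2) ≤ C * x ^ 2 + a * (y + b * x) ^ 2 := by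
  set κ := min (C / (1 + 2 * b ^ 2)) (a / 2)
  refine ⟨κ, by positivity, fun x y => ?_⟩
  have hκC : κ * (1 + 2 * b ^ 2) ≤ C := (le_div_iff₀ (by positivity)).1 (min_le_left _ _)
  have hκa : κ * 2 ≤ a := by linarith [min_le_right (C / (1 + 2 * b ^ 2)) (a / 2)]
  have hy : y ^ 2 ≤ 2 * (y + b * x) ^ 2 + 2 * b ^ 2 * x ^ 2 := by
    nlinarith [sq_nonneg (y + 2 * b * x)]
  calc κ * (x ^ 2 + y ^ 2)
      ≤ κ * (1 + 2 * b ^ 2) * x ^ 2 + κ * 2 * (y + b * x) ^ 2 := by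
        nlinarith [mul_le_mul_of_nonneg_left hy (by positivity : 0 ≤ κ)]
    _ ≤ C * x ^ 2 + a * (y + b * x) ^ 2 := by gcongr

/-- `ω`, `u`, `γ` stand for the deviations of `Ω`, `v`, `Γ` from the equilibrium; for
`b = m l / ρ` the vector `(u 0 + b ω 1, u 1 - b ω 0, u 2)` is `p / ρ`. -/
noncomputable def lyapunovForm (C D a b G : ℝ) (ω u γ : Fin 3 → ℝ) : ℝ :=
  C * (ω 0 ^ 2 + ω 1 ^ 2) + D * ω 2 ^ 2
    + a * ((u 0 + b * ω 1) ^ 2 + (u 1 - b * ω 0) ^ 2 + u 2 ^ 2) + G * (γ ⬝ᵥ γ)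

theorem exists_pos_mul_le_lyapunovForm {C D a G : ℝ} (hC : 0 < C) (hD : 0 < D) (ha : 0 < a)
    (hG : 0 < G) (b : ℝ) :
    ∃ c > 0, ∀ ω u γ : Fin 3 → ℝ,
      c * (ω ⬝ᵥ ω + u ⬝ᵥ u + γ ⬝ᵥ γ) ≤ lyapunovForm C D a b G ω u γ := by
  obtain ⟨κ, hκ, hpair⟩ := exists_pos_mul_sq_add_sq_le hC ha b
  set c := min κ (min D (min a G))
  refine ⟨c, by positivity, fun ω u γ => ?_⟩
  have hcκ : c ≤ κ := min_le_left _ _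
  have hcD : c ≤ D := (min_le_right _ _).trans (min_le_left _ _)
  have hca : c ≤ a := (min_le_right _ _).trans ((min_le_right _ _).trans (min_le_left _ _))
  have hcG : c ≤ G := (min_le_right _ _).trans ((min_le_right _ _).trans (min_le_right _ _))
  have hxy₁ := (mul_le_mul_of_nonneg_right hcκ (by positivity)).trans (hpair (ω 1) (u 0))
  have hxy₂ := (mul_le_mul_of_nonneg_right hcκ (by positivity)).trans (hpair (-ω 0) (u 1))
  have hωz := mul_le_mul_of_nonneg_right hcD (sq_nonneg (ω 2))
  have huz := mul_le_mul_of_nonneg_right hca (sq_nonneg (u 2))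
  have hγ := mul_le_mul_of_nonneg_right hcG (by positivity : 0 ≤ γ 0 ^ 2 + γ 1 ^ 2 + γ 2 ^ 2)
  simp only [lyapunovForm, dotProduct, Fin.sum_univ_three]
  linarith

theorem exists_lyapunovForm_le_mul {C D a G : ℝ} (hC : 0 < C) (hD : 0 < D) (ha : 0 < a)
    (hG : 0 < G) (b : ℝ) :
    ∃ K > 0, ∀ ω u γ : Fin 3 → ℝ,
      lyapunovForm C D a b G ω u γ ≤ K * (ω ⬝ᵥ ω + u ⬝ᵥ u + γ ⬝ᵥ γ) := by
  refine ⟨C + D + 2 * a * (1 + b ^ 2) + G, by positivity, fun ω u γ => ?_⟩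
  simp only [lyapunovForm, dotProduct, Fin.sum_univ_three]
  set S := ω 0 * ω 0 + ω 1 * ω 1 + ω 2 * ω 2 + (u 0 * u 0 + u 1 * u 1 + u 2 * u 2)
    + (γ 0 * γ 0 + γ 1 * γ 1 + γ 2 * γ 2) with hS
  have hωxy : ω 0 ^ 2 + ω 1 ^ 2 ≤ S := by nlinarith
  have hωz : ω 2 ^ 2 ≤ S := by nlinarith
  have hγ : γ 0 * γ 0 + γ 1 * γ 1 + γ 2 * γ 2 ≤ S := by nlinarith
  have hp : (u 0 + b * ω 1) ^ 2 + (u 1 - b * ω 0) ^ 2 + u 2 ^ 2 ≤ 2 * (1 + b ^ 2) * S := by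
    nlinarith [sq_nonneg (u 0 - b * ω 1), sq_nonneg (u 1 + b * ω 0),
      mul_le_mul_of_nonneg_left hωxy (sq_nonneg b)]
  linarith [mul_le_mul_of_nonneg_left hωxy hC.le, mul_le_mul_of_nonneg_left hωz hD.le,
    mul_le_mul_of_nonneg_left hp ha.le, mul_le_mul_of_nonneg_left hγ hG.le]

namespace ClosedLoopEP

noncomputable def angularMomentum (I : Matrix (Fin 3) (Fin 3) ℝ) (m l : ℝ) (χ ω u : Fin 3 → ℝ) :
    Fin 3 → ℝ :=
  I *ᵥ ω + (m * l) • (χ ⨯₃ u)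

noncomputable def linearMomentum (ρ m l : ℝ) (χ ω u : Fin 3 → ℝ) : Fin 3 → ℝ :=
  ρ • u + (m * l) • (ω ⨯₃ χ)

/-- The energy of the Lagrangian `Ω·𝕀Ω/2 + m l Ω·(χ × v) + ρ|v|²/2 − m g l χ·Γ`, whose
momenta are `μ` and `p`. -/
noncomputable def energy (I : Matrix (Fin 3) (Fin 3) ℝ) (m l g ρ : ℝ) (χ ω u γ : Fin 3 → ℝ) : ℝ :=
  (angularMomentum I m l χ ω u ⬝ᵥ ω + linearMomentum ρ m l χ ω u ⬝ᵥ u) / 2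
    + m * g * l * (χ ⬝ᵥ γ)

theorem momentum_dotProduct_comm {I : Matrix (Fin 3) (Fin 3) ℝ} (hI : I.IsSymm)
    (m l ρ : ℝ) (χ ω u ω' u' : Fin 3 → ℝ) :
    angularMomentum I m l χ ω u ⬝ᵥ ω' + linearMomentum ρ m l χ ω u ⬝ᵥ u'
      = angularMomentum I m l χ ω' u' ⬝ᵥ ω + linearMomentum ρ m l χ ω' u' ⬝ᵥ u := by
  have hIω : I *ᵥ ω ⬝ᵥ ω' = I *ᵥ ω' ⬝ᵥ ω := by
    rw [dotProduct_comm, dotProduct_mulVec, ← mulVec_transpose, hI.eq]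
  have hχ : ∀ a b : Fin 3 → ℝ, χ ⨯₃ a ⬝ᵥ b = b ⨯₃ χ ⬝ᵥ a := fun a b => by
    rw [dotProduct_comm (b ⨯₃ χ), triple_product_permutation, dotProduct_comm]
  simp only [angularMomentum, linearMomentum, add_dotProduct, smul_dotProduct, hIω, hχ,
    dotProduct_comm u u']
  ring

theorem rhs_dotProduct_eq_zero (μ p Ω v χ Γ : Fin 3 → ℝ) (G : ℝ) :
    (μ ⨯₃ Ω + p ⨯₃ v - G • (χ ⨯₃ Γ)) ⬝ᵥ Ω + p ⨯₃ Ω ⬝ᵥ v + G * (χ ⬝ᵥ Γ ⨯₃ Ω) = 0 := by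
  rw [sub_dotProduct, add_dotProduct, smul_dotProduct, smul_eq_mul, dotProduct_comm (μ ⨯₃ Ω),
    dot_cross_self, dotProduct_comm (p ⨯₃ v), triple_product_permutation Ω p v,
    dotProduct_comm (p ⨯₃ Ω), triple_product_permutation v p Ω, dotProduct_comm (χ ⨯₃ Γ),
    triple_product_permutation Ω χ Γ, ← cross_anticomm v Ω, dotProduct_neg]
  ring

variable {m l g ρ : ℝ} {χ : Fin 3 → ℝ} {I : Matrix (Fin 3) (Fin 3) ℝ} {Ω v Γ : ℝ → Fin 3 → ℝ}

theorem hasDerivAt_angularMomentum (h : ClosedLoopEP m l g ρ χ I Ω v Γ) (t : ℝ) :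
    HasDerivAt (fun s => angularMomentum I m l χ (Ω s) (v s))
      (angularMomentum I m l χ (deriv Ω t) (deriv v t)) t :=
  (((h.1 t).hasDerivAt.mulVec I).add
    (((hasDerivAt_const t χ).cross (h.2.1 t).hasDerivAt).const_smul (m * l))).congr_deriv
    (by simp [angularMomentum])

theorem hasDerivAt_linearMomentum (h : ClosedLoopEP m l g ρ χ I Ω v Γ) (t : ℝ) :
    HasDerivAt (fun s => linearMomentum ρ m l χ (Ω s) (v s))
      (linearMomentum ρ m l χ (deriv Ω t) (deriv v t)) t :=
  (((h.2.1 t).hasDerivAt.const_smul ρ).add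
    (((h.1 t).hasDerivAt.cross (hasDerivAt_const t χ)).const_smul (m * l))).congr_deriv
    (by simp [linearMomentum])

theorem angularMomentum_deriv (h : ClosedLoopEP m l g ρ χ I Ω v Γ) (t : ℝ) :
    angularMomentum I m l χ (deriv Ω t) (deriv v t)
      = angularMomentum I m l χ (Ω t) (v t) ⨯₃ Ω t
        + linearMomentum ρ m l χ (Ω t) (v t) ⨯₃ v t - (m * g * l) • (χ ⨯₃ Γ t) :=
  (hasDerivAt_angularMomentum h t).deriv.symm.trans (h.2.2.2.1 t)

theorem linearMomentum_deriv (h : ClosedLoopEP m l g ρ χ I Ω v Γ) (t : ℝ) :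
    linearMomentum ρ m l χ (deriv Ω t) (deriv v t)
      = linearMomentum ρ m l χ (Ω t) (v t) ⨯₃ Ω t :=
  (hasDerivAt_linearMomentum h t).deriv.symm.trans (h.2.2.2.2.1 t)

theorem energy_eq (h : ClosedLoopEP m l g ρ χ I Ω v Γ) (hI : I.IsSymm) (t s : ℝ) :
    energy I m l g ρ χ (Ω t) (v t) (Γ t) = energy I m l g ρ χ (Ω s) (v s) (Γ s) := by
  refine eq_of_forall_hasDerivAt_zero
    (f := fun t => energy I m l g ρ χ (Ω t) (v t) (Γ t)) (fun t => ?_) t s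
  have hE := ((((hasDerivAt_angularMomentum h t).dotProduct (h.1 t).hasDerivAt).add
    ((hasDerivAt_linearMomentum h t).dotProduct (h.2.1 t).hasDerivAt)).div_const 2).add
    (((hasDerivAt_const t χ).dotProduct (h.2.2.1 t).hasDerivAt).const_mul (m * g * l))
  refine hE.congr_deriv ?_
  rw [add_add_add_comm, ← momentum_dotProduct_comm hI m l ρ χ (deriv Ω t) (deriv v t),
    ← two_mul, mul_div_cancel_left₀ _ two_ne_zero, angularMomentum_deriv h,
    linearMomentum_deriv h, h.2.2.2.2.2 t, zero_dotProduct, zero_add]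
  exact rhs_dotProduct_eq_zero _ _ _ _ _ _ _

theorem dotProduct_self_linearMomentum_eq (h : ClosedLoopEP m l g ρ χ I Ω v Γ) (t s : ℝ) :
    linearMomentum ρ m l χ (Ω t) (v t) ⬝ᵥ linearMomentum ρ m l χ (Ω t) (v t)
      = linearMomentum ρ m l χ (Ω s) (v s) ⬝ᵥ linearMomentum ρ m l χ (Ω s) (v s) := by
  refine eq_of_forall_hasDerivAt_zero (f := fun t =>
    linearMomentum ρ m l χ (Ω t) (v t) ⬝ᵥ linearMomentum ρ m l χ (Ω t) (v t)) (fun t => ?_) t s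
  refine ((hasDerivAt_linearMomentum h t).dotProduct
    (hasDerivAt_linearMomentum h t)).congr_deriv ?_
  rw [linearMomentum_deriv h, dotProduct_comm, dot_self_cross, zero_add]

theorem dotProduct_self_gravityDir_eq (h : ClosedLoopEP m l g ρ χ I Ω v Γ) (t s : ℝ) :
    Γ t ⬝ᵥ Γ t = Γ s ⬝ᵥ Γ s := by
  refine eq_of_forall_hasDerivAt_zero (f := fun t => Γ t ⬝ᵥ Γ t) (fun t => ?_) t s
  refine ((h.2.2.1 t).hasDerivAt.dotProduct (h.2.2.1 t).hasDerivAt).congr_deriv ?_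
  rw [h.2.2.2.2.2 t, dotProduct_comm, dot_self_cross, zero_add]

section LagrangeTop

variable {I₁ I₃ : ℝ}

theorem spin_eq (h : ClosedLoopEP m l g ρ e₃ (diagonal ![I₁, I₁, I₃]) Ω v Γ) (hI₃ : I₃ ≠ 0)
    (t s : ℝ) : Ω t 2 = Ω s 2 := by
  refine eq_of_forall_hasDerivAt_zero (f := fun t => Ω t 2) (fun t => ?_) t s
  have hμ := congrFun (h.angularMomentum_deriv t) 2
  simp only [angularMomentum, linearMomentum, mulVec_diagonal, cross_apply, Pi.add_apply,
    Pi.sub_apply, Pi.smul_apply, smul_eq_mul, cons_val_zero, cons_val_one, cons_val] at hμ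
  have hI₃Ω : I₃ * deriv Ω t 2 = 0 := by linear_combination hμ
  exact (hasDerivAt_pi.1 (h.1 t).hasDerivAt 2).congr_deriv
    ((mul_eq_zero.1 hI₃Ω).resolve_left hI₃)

theorem lyapunovForm_eq_energyCasimir (hρ : ρ ≠ 0) (Ω₃0 : ℝ) (ω u γ : Fin 3 → ℝ) :
    lyapunovForm (((m * l) ^ 2 / ρ - I₁) / 2) (I₃ / 2) (ρ / 2) (m * l / ρ) (m * g * l / 2)
        (ω - Ω₃0 • e₃) u (γ - e₃)
      = -energy (diagonal ![I₁, I₁, I₃]) m l g ρ e₃ ω u γ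
        + linearMomentum ρ m l e₃ ω u ⬝ᵥ linearMomentum ρ m l e₃ ω u / ρ
        + m * g * l / 2 * (γ ⬝ᵥ γ) + I₃ * ω 2 * (ω 2 - Ω₃0) + I₃ * Ω₃0 ^ 2 / 2
        + m * g * l / 2 := by
  simp only [lyapunovForm, energy, angularMomentum, linearMomentum, dotProduct,
    Fin.sum_univ_three, cross_apply, mulVec_diagonal, Pi.add_apply, Pi.sub_apply, Pi.smul_apply,
    smul_eq_mul, cons_val_zero, cons_val_one, cons_val]
  field_simp
  ring

theorem lyapunovForm_eq (h : ClosedLoopEP m l g ρ e₃ (diagonal ![I₁, I₁, I₃]) Ω v Γ)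
    (hρ : ρ ≠ 0) (hI₃ : I₃ ≠ 0) (Ω₃0 t s : ℝ) :
    lyapunovForm (((m * l) ^ 2 / ρ - I₁) / 2) (I₃ / 2) (ρ / 2) (m * l / ρ) (m * g * l / 2)
        (Ω t - Ω₃0 • e₃) (v t) (Γ t - e₃)
      = lyapunovForm (((m * l) ^ 2 / ρ - I₁) / 2) (I₃ / 2) (ρ / 2) (m * l / ρ) (m * g * l / 2)
        (Ω s - Ω₃0 • e₃) (v s) (Γ s - e₃) := by
  rw [lyapunovForm_eq_energyCasimir hρ, lyapunovForm_eq_energyCasimir hρ,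
    h.energy_eq (isSymm_diagonal _) t s, h.dotProduct_self_linearMomentum_eq t s,
    h.dotProduct_self_gravityDir_eq t s, h.spin_eq hI₃ t s]

end LagrangeTop

end ClosedLoopEP

/-- Lyapunov stability of the upright-spinning equilibrium `(Ω, v, Γ) = (Ω₃⁰e₃, 0, e₃)`
of the closed-loop Euler–Poincaré system for the Lagrange top
(`𝕀 = diag(I₁, I₁, I₃)`, `χ = e₃`), for any `0 < ρ < m²l²/I₁` and every spin rate
`Ω₃⁰ ∈ ℝ`.  The distance is the Euclidean norm on `ℝ⁹`. -/
theorem heavyTop_upright_stable (m l g ρ I₁ I₃ : ℝ)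
    (hm : 0 < m) (hl : 0 < l) (hg : 0 < g) (hI₁ : 0 < I₁) (hI₃ : 0 < I₃)
    (hρ : 0 < ρ) (hρm : ρ < m ^ 2 * l ^ 2 / I₁) (Ω₃0 : ℝ) :
    ∀ ε > (0 : ℝ), ∃ δ > (0 : ℝ),
      ∀ (Ω v Γ : ℝ → Fin 3 → ℝ),
        ClosedLoopEP m l g ρ ![(0 : ℝ), 0, 1] (Matrix.diagonal ![I₁, I₁, I₃]) Ω v Γ →
        Real.sqrt ((Ω 0 - Ω₃0 • ![(0 : ℝ), 0, 1]) ⬝ᵥ (Ω 0 - Ω₃0 • ![(0 : ℝ), 0, 1])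
            + v 0 ⬝ᵥ v 0 + (Γ 0 - ![(0 : ℝ), 0, 1]) ⬝ᵥ (Γ 0 - ![(0 : ℝ), 0, 1])) < δ →
        ∀ t ≥ (0 : ℝ),
          Real.sqrt ((Ω t - Ω₃0 • ![(0 : ℝ), 0, 1]) ⬝ᵥ (Ω t - Ω₃0 • ![(0 : ℝ), 0, 1])
            + v t ⬝ᵥ v t + (Γ t - ![(0 : ℝ), 0, 1]) ⬝ᵥ (Γ t - ![(0 : ℝ), 0, 1])) < ε := by
  intro ε hε
  have hC : 0 < ((m * l) ^ 2 / ρ - I₁) / 2 := by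
    rw [lt_div_iff₀ hI₁, ← mul_pow, mul_comm, ← lt_div_iff₀ hρ] at hρm
    linarith
  have hG : 0 < m * g * l / 2 := by positivity
  obtain ⟨c, hc, hlow⟩ :=
    exists_pos_mul_le_lyapunovForm hC (half_pos hI₃) (half_pos hρ) hG (m * l / ρ)
  obtain ⟨K, hK, hup⟩ :=
    exists_lyapunovForm_le_mul hC (half_pos hI₃) (half_pos hρ) hG (m * l / ρ)
  refine ⟨ε * √(c / K), by positivity, fun Ω v Γ h h0 t _ => ?_⟩
  exact sqrt_lt_of_conserved (x := (Ω 0 - Ω₃0 • e₃, v 0, Γ 0 - e₃))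
    (y := (Ω t - Ω₃0 • e₃, v t, Γ t - e₃)) hc hK
    (fun x => hlow x.1 x.2.1 x.2.2) (fun x => hup x.1 x.2.1 x.2.2)
    (h.lyapunovForm_eq hρ.ne' hI₃.ne' Ω₃0 t 0) h0
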